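/- Let 𝒫 be a converting vector set from ρ to σ, let {μ_i}_{i∈[q]} and {ν_i}_{i∈[q]} be unit vectors in ℂ^q satisfying ⟨μ_i|ν_j⟩ = (q/(2(q−1)))·(1 − δ_{ij}) for all i, j ∈ [q], let x ∈ X, let ε̂ > 0, and let α > 0 satisfy α ≥ w_−(𝒫, x). Then ‖P_0(U(𝒫, x, α, ε̂)) |t_{x+}⟩‖² ≥ 1/(1 + ε̂) ≥ 1 − ε̂. -/

import Mathlib

noncomputable section

open Finset

variable {q n m : ℕ} {𝓗 : Type*} [NormedAddCommGroup 𝓗] [InnerProductSpace ℂ 𝓗]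

/-- `(u, v)` is a converting vector set from `ρ` to `σ` (relative to `X`):
for all `x, y ∈ X`, `⟨ρ_x|ρ_y⟩ − ⟨σ_x|σ_y⟩ = Σ_{j : x_j ≠ y_j} ⟨u_{xj}|v_{yj}⟩`. -/
def IsCVS (X : Finset (Fin n → Fin q)) (ρ σ : (Fin n → Fin q) → 𝓗)
    (u v : (Fin n → Fin q) → Fin n → EuclideanSpace ℂ (Fin m)) : Prop :=
  ∀ x ∈ X, ∀ y ∈ X,
    (inner ℂ (ρ x) (ρ y) : ℂ) - (inner ℂ (σ x) (σ y) : ℂ) =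
      ∑ j ∈ Finset.univ.filter (fun j => x j ≠ y j), (inner ℂ (u x j) (v y j) : ℂ)

/-- witness size of a family of vectors: `Σ_j ‖u_{xj}‖²`. -/
def wSize (u : (Fin n → Fin q) → Fin n → EuclideanSpace ℂ (Fin m))
    (x : Fin n → Fin q) : ℝ :=
  ∑ j : Fin n, ‖u x j‖ ^ 2

/-- The space `(ℂ²⊗𝒣) ⊕ (ℂⁿ⊗ℂ^q⊗ℂ^m)`, realized as the `L²` direct sum of
`𝒣 ⊕ 𝒣` (the two components of `ℂ²⊗𝒣`) and `n` copies of `ℂ^{q×m}`. -/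
abbrev BigSpace (𝓗 : Type*) [NormedAddCommGroup 𝓗] [InnerProductSpace ℂ 𝓗]
    (q n m : ℕ) : Type _ :=
  WithLp 2 ((PiLp 2 fun _ : Fin 2 => 𝓗) ×
    (PiLp 2 fun _ : Fin n => EuclideanSpace ℂ (Fin q × Fin m)))

/-- build an element of `BigSpace` from its two components. -/
def mkBig (a : PiLp 2 fun _ : Fin 2 => 𝓗)
    (g : PiLp 2 fun _ : Fin n => EuclideanSpace ℂ (Fin q × Fin m)) :
    BigSpace 𝓗 q n m :=
  (WithLp.equiv 2 _).symm (a, g)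

/-- `|0⟩a + |1⟩b ∈ ℂ²⊗𝒣`. -/
def mk2 (a b : 𝓗) : PiLp 2 fun _ : Fin 2 => 𝓗 :=
  (WithLp.equiv 2 _).symm (fun i => if i = 0 then a else b)

/-- build an element of `ℂⁿ⊗ℂ^q⊗ℂ^m` from its components. -/
def mkPi (g : Fin n → EuclideanSpace ℂ (Fin q × Fin m)) :
    PiLp 2 fun _ : Fin n => EuclideanSpace ℂ (Fin q × Fin m) :=
  (WithLp.equiv 2 _).symm g

/-- the pure tensor `ν ⊗ w ∈ ℂ^q ⊗ ℂ^m`. -/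
def tens (ν : EuclideanSpace ℂ (Fin q)) (w : EuclideanSpace ℂ (Fin m)) :
    EuclideanSpace ℂ (Fin q × Fin m) :=
  (WithLp.equiv 2 _).symm fun p => ν p.1 * w p.2

/-- `|t_{x+}⟩ = (1/√2)(|0⟩|ρ_x⟩ + |1⟩|σ_x⟩)`. -/
def tPlus (ρ σ : (Fin n → Fin q) → 𝓗) (x : Fin n → Fin q) :
    BigSpace 𝓗 q n m :=
  mkBig (mk2 ((((Real.sqrt 2 : ℝ) : ℂ))⁻¹ • ρ x) ((((Real.sqrt 2 : ℝ) : ℂ))⁻¹ • σ x)) 0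

/-- `|t_{x−}⟩ = (1/√2)(|0⟩|ρ_x⟩ − |1⟩|σ_x⟩)`. -/
def tMinus (ρ σ : (Fin n → Fin q) → 𝓗) (x : Fin n → Fin q) :
    BigSpace 𝓗 q n m :=
  mkBig (mk2 ((((Real.sqrt 2 : ℝ) : ℂ))⁻¹ • ρ x) (-((((Real.sqrt 2 : ℝ) : ℂ))⁻¹ • σ x))) 0

/-- `|ψ_{x,α,ε̂}⟩ = √(ε̂/α)|t_{x−}⟩ − Σ_j |j⟩|μ_{x_j}⟩|u_{xj}⟩`. -/
def psi (ρ σ : (Fin n → Fin q) → 𝓗)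
    (u : (Fin n → Fin q) → Fin n → EuclideanSpace ℂ (Fin m))
    (μ : Fin q → EuclideanSpace ℂ (Fin q)) (α εh : ℝ) (x : Fin n → Fin q) :
    BigSpace 𝓗 q n m :=
  (((Real.sqrt (εh / α) : ℝ) : ℂ)) • tMinus ρ σ x -
    mkBig 0 (mkPi fun j => tens (μ (x j)) (u x j))

/-- `⟨ν| ⊗ I : ℂ^q ⊗ ℂ^m → ℂ^m`, contraction of the first tensor factor with `ν`. -/
def contractL (ν : EuclideanSpace ℂ (Fin q)) :
    EuclideanSpace ℂ (Fin q × Fin m) →ₗ[ℂ] EuclideanSpace ℂ (Fin m) :=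
  (WithLp.linearEquiv 2 ℂ (Fin m → ℂ)).symm.toLinearMap ∘ₗ
    LinearMap.pi fun k => (innerSL ℂ (tens ν (EuclideanSpace.single k 1))).toLinearMap

/-- `|ν⟩ ⊗ I : ℂ^m → ℂ^q ⊗ ℂ^m`, tensoring with `ν`. -/
def tensL (ν : EuclideanSpace ℂ (Fin q)) :
    EuclideanSpace ℂ (Fin m) →ₗ[ℂ] EuclideanSpace ℂ (Fin q × Fin m) :=
  (WithLp.linearEquiv 2 ℂ (Fin q × Fin m → ℂ)).symm.toLinearMap ∘ₗ
    LinearMap.pi fun p : Fin q × Fin m =>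
      ν p.1 • (LinearMap.proj p.2 ∘ₗ (WithLp.linearEquiv 2 ℂ (Fin m → ℂ)).toLinearMap)

/-- `|ν⟩⟨ν| ⊗ I` on `ℂ^q ⊗ ℂ^m`. -/
def projMu (ν : EuclideanSpace ℂ (Fin q)) :
    EuclideanSpace ℂ (Fin q × Fin m) →ₗ[ℂ] EuclideanSpace ℂ (Fin q × Fin m) :=
  tensL ν ∘ₗ contractL ν

/-- `Σ_j |j⟩⟨j| ⊗ |μ_{x_j}⟩⟨μ_{x_j}| ⊗ I` on `ℂⁿ⊗ℂ^q⊗ℂ^m`. -/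
def sumProjMu (μ : Fin q → EuclideanSpace ℂ (Fin q)) (x : Fin n → Fin q) :
    (PiLp 2 fun _ : Fin n => EuclideanSpace ℂ (Fin q × Fin m)) →ₗ[ℂ]
      (PiLp 2 fun _ : Fin n => EuclideanSpace ℂ (Fin q × Fin m)) :=
  (WithLp.linearEquiv 2 ℂ (∀ _ : Fin n, EuclideanSpace ℂ (Fin q × Fin m))).symm.toLinearMap ∘ₗ
    (LinearMap.pi fun j => projMu (μ (x j)) ∘ₗ LinearMap.proj j) ∘ₗ
    (WithLp.linearEquiv 2 ℂ (∀ _ : Fin n, EuclideanSpace ℂ (Fin q × Fin m))).toLinearMap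

/-- the canonical linear identification of `BigSpace` with the product. -/
def bigEquiv (𝓗 : Type*) [NormedAddCommGroup 𝓗] [InnerProductSpace ℂ 𝓗] (q n m : ℕ) :
    BigSpace 𝓗 q n m ≃ₗ[ℂ]
      (PiLp 2 fun _ : Fin 2 => 𝓗) ×
        (PiLp 2 fun _ : Fin n => EuclideanSpace ℂ (Fin q × Fin m)) :=
  WithLp.linearEquiv 2 ℂ _

/-- `Π_x = I − Σ_j |j⟩⟨j| ⊗ |μ_{x_j}⟩⟨μ_{x_j}| ⊗ I` on `(ℂ²⊗𝒣) ⊕ (ℂⁿ⊗ℂ^q⊗ℂ^m)`. -/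
def PiX (μ : Fin q → EuclideanSpace ℂ (Fin q)) (x : Fin n → Fin q) :
    BigSpace 𝓗 q n m →ₗ[ℂ] BigSpace 𝓗 q n m :=
  LinearMap.id -
    (bigEquiv 𝓗 q n m).symm.toLinearMap ∘ₗ
      (LinearMap.prodMap 0 (sumProjMu μ x)) ∘ₗ (bigEquiv 𝓗 q n m).toLinearMap

/-- orthogonal projection onto a submodule, as an endomorphism. -/
def projL {K : Type*} [NormedAddCommGroup K] [InnerProductSpace ℂ K] [FiniteDimensional ℂ K]
    (S : Submodule ℂ K) : K →ₗ[ℂ] K :=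
  S.subtype ∘ₗ (S.orthogonalProjectionOnto).toLinearMap

/-- `Λ^{α,ε̂}`: the orthogonal projection onto the orthogonal complement of
`span{|ψ_{x,α,ε̂}⟩ : x ∈ X}`. -/
def LambdaCVS [FiniteDimensional ℂ 𝓗] (X : Finset (Fin n → Fin q))
    (ρ σ : (Fin n → Fin q) → 𝓗)
    (u : (Fin n → Fin q) → Fin n → EuclideanSpace ℂ (Fin m))
    (μ : Fin q → EuclideanSpace ℂ (Fin q)) (α εh : ℝ) :
    BigSpace 𝓗 q n m →ₗ[ℂ] BigSpace 𝓗 q n m :=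
  projL ((Submodule.span ℂ ((fun x => psi ρ σ u μ α εh x) '' (X : Set (Fin n → Fin q))))ᗮ)

/-- `U(𝒫, x, α, ε̂) = (2Π_x − I)(2Λ^{α,ε̂} − I)`. -/
def Ucvs [FiniteDimensional ℂ 𝓗] (X : Finset (Fin n → Fin q))
    (ρ σ : (Fin n → Fin q) → 𝓗)
    (u : (Fin n → Fin q) → Fin n → EuclideanSpace ℂ (Fin m))
    (μ : Fin q → EuclideanSpace ℂ (Fin q)) (α εh : ℝ) (x : Fin n → Fin q) :
    BigSpace 𝓗 q n m →ₗ[ℂ] BigSpace 𝓗 q n m :=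
  (2 • PiX μ x - LinearMap.id) ∘ₗ (2 • LambdaCVS X ρ σ u μ α εh - LinearMap.id)

/-- `phaseSpace U Θ` is the span of the eigenvectors of `U` with eigenvalue `e^{iθ}`
for `|θ| ≤ Θ`; the orthogonal projection onto it is `P_Θ(U)`. -/
def phaseSpace {K : Type*} [NormedAddCommGroup K] [InnerProductSpace ℂ K]
    (U : K →ₗ[ℂ] K) (Θ : ℝ) : Submodule ℂ K :=
  ⨆ θ : Set.Icc (-Θ) Θ, Module.End.eigenspace U (Complex.exp (Complex.I * (θ : ℝ)))

/-!
The vector `φ = |t_{x+}⟩ + β Σ_j |j⟩|ν_{x_j}⟩|v_{xj}⟩` with `β = √(ε̂/α) (q − 1)/q` is fixed by `U`.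
`Π_x` fixes it because `μ_{x_j} ⊥ ν_{x_j}`.  `Λ` fixes it because, by the converting-vector-set
identity and `⟨μ_i|ν_j⟩ = q/(2(q − 1))` for `i ≠ j`, both terms of `⟨ψ_y|φ⟩` are multiples of
`⟨ρ_y|ρ_x⟩ − ⟨σ_y|σ_x⟩`, and `β` is chosen so that they cancel.  Since `⟨φ|t_{x+}⟩ = 1` and
`‖φ‖² = 1 + β² w_−(𝒫, x) ≤ 1 + ε̂`, Cauchy–Schwarz against the projection of `t_{x+}` onto the
fixed space gives `‖P_0(U) t_{x+}‖² ≥ 1/‖φ‖² ≥ 1/(1 + ε̂)`.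
-/

open scoped InnerProductSpace

theorem mem_orthogonal_span_of_forall_inner_eq_zero {K : Type*} [NormedAddCommGroup K]
    [InnerProductSpace ℂ K] {s : Set K} {φ : K}
    (h : ∀ w ∈ s, ⟪w, φ⟫_ℂ = 0) : φ ∈ (Submodule.span ℂ s)ᗮ := by
  rw [Submodule.mem_orthogonal]
  intro w hw
  induction hw using Submodule.span_induction with
  | mem w hw => exact h w hw
  | zero => exact inner_zero_left φ
  | add _ _ _ _ h₁ h₂ => rw [inner_add_left, h₁, h₂, add_zero]
  | smul c _ _ h => rw [inner_smul_left, h, mul_zero]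

section Projection

variable {K : Type*} [NormedAddCommGroup K] [InnerProductSpace ℂ K] [FiniteDimensional ℂ K]
  {S : Submodule ℂ K}

theorem projL_apply_eq_self {v : K} (hv : v ∈ S) : projL S v = v :=
  S.starProjection_eq_self_iff.mpr hv

theorem norm_inner_le_norm_mul_norm_projL {φ : K} (hφ : φ ∈ S) (t : K) :
    ‖⟪φ, t⟫_ℂ‖ ≤ ‖φ‖ * ‖projL S t‖ :=
  calc ‖⟪φ, t⟫_ℂ‖ = ‖⟪S.starProjection φ, t⟫_ℂ‖ := by rw [S.starProjection_eq_self_iff.mpr hφ]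
    _ = ‖⟪φ, projL S t⟫_ℂ‖ := by rw [S.inner_starProjection_left_eq_right]; rfl
    _ ≤ ‖φ‖ * ‖projL S t‖ := norm_inner_le_norm _ _

theorem one_div_le_norm_projL_sq {φ t : K} {c : ℝ} (hφ : φ ∈ S) (hφt : ⟪φ, t⟫_ℂ = 1)
    (hc : ‖φ‖ ^ 2 ≤ c) : 1 / c ≤ ‖projL S t‖ ^ 2 := by
  have hCS : 1 ≤ ‖φ‖ * ‖projL S t‖ := by
    simpa [hφt] using norm_inner_le_norm_mul_norm_projL hφ t
  have hCS_sq : 1 ≤ ‖φ‖ ^ 2 * ‖projL S t‖ ^ 2 := by nlinarith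
  have hc_pos : 0 < c := by nlinarith [sq_nonneg ‖projL S t‖]
  rw [div_le_iff₀ hc_pos]
  nlinarith [sq_nonneg ‖projL S t‖]

end Projection

theorem two_smul_sub_id_apply_of_apply_eq_self {R M : Type*} [Semiring R] [AddCommGroup M]
    [Module R M] {f : M →ₗ[R] M} {v : M} (hv : f v = v) :
    (2 • f - LinearMap.id : M →ₗ[R] M) v = v := by
  rw [LinearMap.sub_apply, LinearMap.smul_apply, hv, two_smul, LinearMap.id_apply,
    add_sub_cancel_right]

theorem inner_mkBig (a a' : PiLp 2 fun _ : Fin 2 => 𝓗)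
    (g g' : PiLp 2 fun _ : Fin n => EuclideanSpace ℂ (Fin q × Fin m)) :
    ⟪mkBig a g, mkBig a' g'⟫_ℂ = ⟪a, a'⟫_ℂ + ⟪g, g'⟫_ℂ := rfl

theorem inner_mk2 (a b a' b' : 𝓗) : ⟪mk2 a b, mk2 a' b'⟫_ℂ = ⟪a, a'⟫_ℂ + ⟪b, b'⟫_ℂ := by
  simp [mk2, PiLp.inner_apply, Fin.sum_univ_two]

theorem inner_mkPi (g g' : Fin n → EuclideanSpace ℂ (Fin q × Fin m)) :
    ⟪mkPi g, mkPi g'⟫_ℂ = ∑ j, ⟪g j, g' j⟫_ℂ := by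
  simp [mkPi, PiLp.inner_apply]

theorem inner_tens (μ₀ ν₀ : EuclideanSpace ℂ (Fin q)) (w w' : EuclideanSpace ℂ (Fin m)) :
    ⟪tens μ₀ w, tens ν₀ w'⟫_ℂ = ⟪μ₀, ν₀⟫_ℂ * ⟪w, w'⟫_ℂ := by
  simp only [tens, PiLp.inner_apply, RCLike.inner_apply, WithLp.equiv_symm_apply,
    map_mul]
  rw [Fintype.sum_prod_type, Finset.sum_mul_sum]
  exact Finset.sum_congr rfl fun i _ => Finset.sum_congr rfl fun k _ => by ring

theorem projMu_tens (μ₀ ν₀ : EuclideanSpace ℂ (Fin q)) (w : EuclideanSpace ℂ (Fin m)) :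
    projMu μ₀ (tens ν₀ w) = ⟪μ₀, ν₀⟫_ℂ • tens μ₀ w := by
  have hcontract : contractL μ₀ (tens ν₀ w) = ⟪μ₀, ν₀⟫_ℂ • w := by
    ext k
    change ⟪tens μ₀ (EuclideanSpace.single k 1), tens ν₀ w⟫_ℂ = _
    simp [inner_tens, EuclideanSpace.inner_single_left]
  have htens : tensL μ₀ w = tens μ₀ w := by
    ext p
    simp [tensL, tens]
  rw [projMu, LinearMap.comp_apply, hcontract, map_smul, htens]

/-- `Σ_j |j⟩|μ_{x_j}⟩|u_{xj}⟩`, the second component of `ψ_{x,α,ε̂}`. -/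
def tensorSum (μ : Fin q → EuclideanSpace ℂ (Fin q))
    (u : (Fin n → Fin q) → Fin n → EuclideanSpace ℂ (Fin m)) (x : Fin n → Fin q) :
    BigSpace 𝓗 q n m :=
  mkBig 0 (mkPi fun j => tens (μ (x j)) (u x j))

theorem conj_inv_sqrt_two_mul_inv_sqrt_two :
    (starRingEnd ℂ) ((√2 : ℝ) : ℂ)⁻¹ * ((√2 : ℝ) : ℂ)⁻¹ = 2⁻¹ := by
  rw [map_inv₀, Complex.conj_ofReal, ← mul_inv, ← Complex.ofReal_mul,
    Real.mul_self_sqrt zero_le_two, Complex.ofReal_ofNat]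

section Vectors

variable (ρ σ : (Fin n → Fin q) → 𝓗) (μ ν : Fin q → EuclideanSpace ℂ (Fin q))
  (u v : (Fin n → Fin q) → Fin n → EuclideanSpace ℂ (Fin m)) (x y : Fin n → Fin q)

theorem psi_eq_sub_tensorSum (α εh : ℝ) :
    psi ρ σ u μ α εh x = ((√(εh / α) : ℝ) : ℂ) • tMinus ρ σ x - tensorSum μ u x := rfl

theorem inner_tensorSum :
    ⟪(tensorSum μ u y : BigSpace 𝓗 q n m), tensorSum ν v x⟫_ℂ =
      ∑ j, ⟪μ (y j), ν (x j)⟫_ℂ * ⟪u y j, v x j⟫_ℂ := by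
  simp only [tensorSum, inner_mkBig, inner_zero_left, zero_add, inner_mkPi, inner_tens]

theorem inner_tMinus_tPlus :
    ⟪(tMinus ρ σ y : BigSpace 𝓗 q n m), tPlus ρ σ x⟫_ℂ =
      2⁻¹ * (⟪ρ y, ρ x⟫_ℂ - ⟪σ y, σ x⟫_ℂ) := by
  simp only [tMinus, tPlus, inner_mkBig, inner_zero_left, add_zero, inner_mk2, inner_neg_left,
    inner_smul_left, inner_smul_right]
  linear_combination (⟪ρ y, ρ x⟫_ℂ - ⟪σ y, σ x⟫_ℂ) * conj_inv_sqrt_two_mul_inv_sqrt_two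

theorem norm_tPlus_sq :
    ‖(tPlus ρ σ x : BigSpace 𝓗 q n m)‖ ^ 2 = (‖ρ x‖ ^ 2 + ‖σ x‖ ^ 2) / 2 := by
  have h : ⟪(tPlus ρ σ x : BigSpace 𝓗 q n m), tPlus ρ σ x⟫_ℂ =
      (((‖ρ x‖ ^ 2 + ‖σ x‖ ^ 2) / 2 : ℝ) : ℂ) := by
    rw [tPlus, inner_mkBig, inner_zero_left, add_zero, inner_mk2, inner_smul_left,
      inner_smul_right, inner_smul_left, inner_smul_right, inner_self_eq_norm_sq_to_K,
      inner_self_eq_norm_sq_to_K]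
    push_cast
    linear_combination ((‖ρ x‖ : ℂ) ^ 2 + (‖σ x‖ : ℂ) ^ 2) * conj_inv_sqrt_two_mul_inv_sqrt_two
  rw [InnerProductSpace.norm_sq_eq_re_inner (𝕜 := ℂ), h, RCLike.re_to_complex, Complex.ofReal_re]

theorem inner_tPlus_tensorSum : ⟪(tPlus ρ σ y : BigSpace 𝓗 q n m), tensorSum ν v x⟫_ℂ = 0 := by
  rw [tPlus, tensorSum, inner_mkBig, inner_zero_left, inner_zero_right, add_zero]

theorem inner_tMinus_tensorSum :
    ⟪(tMinus ρ σ y : BigSpace 𝓗 q n m), tensorSum ν v x⟫_ℂ = 0 := by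
  rw [tMinus, tensorSum, inner_mkBig, inner_zero_left, inner_zero_right, add_zero]

theorem inner_tensorSum_tPlus : ⟪(tensorSum ν v x : BigSpace 𝓗 q n m), tPlus ρ σ y⟫_ℂ = 0 := by
  rw [tPlus, tensorSum, inner_mkBig, inner_zero_left, inner_zero_right, add_zero]

theorem norm_tensorSum_sq (hν : ∀ i, ‖ν i‖ = 1) :
    ‖(tensorSum ν v x : BigSpace 𝓗 q n m)‖ ^ 2 = wSize v x := by
  have h : ⟪(tensorSum ν v x : BigSpace 𝓗 q n m), tensorSum ν v x⟫_ℂ = ((wSize v x : ℝ) : ℂ) := by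
    rw [inner_tensorSum, wSize]
    simp [inner_self_eq_norm_sq_to_K, hν]
  rw [InnerProductSpace.norm_sq_eq_re_inner (𝕜 := ℂ), h, RCLike.re_to_complex, Complex.ofReal_re]

theorem PiX_mkBig (a : PiLp 2 fun _ : Fin 2 => 𝓗) (g : Fin n → EuclideanSpace ℂ (Fin q × Fin m)) :
    PiX μ x (mkBig a (mkPi g)) =
      mkBig a (mkPi g) - mkBig 0 (mkPi fun j => projMu (μ (x j)) (g j)) := rfl

theorem PiX_tPlus : PiX μ x (tPlus ρ σ y : BigSpace 𝓗 q n m) = tPlus ρ σ y := by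
  change PiX μ x (mkBig _ (mkPi fun _ => 0)) = _
  rw [PiX_mkBig]
  simp only [map_zero]
  exact sub_eq_self.mpr rfl

theorem PiX_tensorSum (h : ∀ j, ⟪μ (x j), ν (y j)⟫_ℂ = 0) :
    PiX μ x (tensorSum ν v y : BigSpace 𝓗 q n m) = tensorSum ν v y := by
  rw [tensorSum, PiX_mkBig]
  simp only [projMu_tens, h, zero_smul]
  exact sub_eq_self.mpr rfl

end Vectors

section Witness

variable {X : Finset (Fin n → Fin q)} {ρ σ : (Fin n → Fin q) → 𝓗}
  {μ ν : Fin q → EuclideanSpace ℂ (Fin q)}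
  {u v : (Fin n → Fin q) → Fin n → EuclideanSpace ℂ (Fin m)}
  {x y : Fin n → Fin q}

theorem inner_tensorSum_of_isCVS (hP : IsCVS X ρ σ u v)
    (hμν : ∀ i j, ⟪μ i, ν j⟫_ℂ = ((q : ℂ) / (2 * ((q : ℂ) - 1))) * (if i = j then 0 else 1))
    (hy : y ∈ X) (hx : x ∈ X) :
    ⟪(tensorSum μ u y : BigSpace 𝓗 q n m), tensorSum ν v x⟫_ℂ =
      (q : ℂ) / (2 * ((q : ℂ) - 1)) * (⟪ρ y, ρ x⟫_ℂ - ⟪σ y, σ x⟫_ℂ) := by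
  rw [inner_tensorSum, hP y hy x hx, Finset.sum_filter, Finset.mul_sum]
  refine Finset.sum_congr rfl fun j _ => ?_
  by_cases h : y j = x j <;> simp [hμν, h]

-- `β = √(ε̂/α) (q − 1)/q` is chosen so that `β ⟨μ_i|ν_j⟩ = √(ε̂/α)/2` for `i ≠ j`.
variable (ρ σ ν v) in
def fixedWitness (α εh : ℝ) (x : Fin n → Fin q) : BigSpace 𝓗 q n m :=
  tPlus ρ σ x + ((√(εh / α) * (q - 1) / q : ℝ) : ℂ) • tensorSum ν v x

theorem inner_psi_fixedWitness (hq : 2 ≤ q) (hP : IsCVS X ρ σ u v)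
    (hμν : ∀ i j, ⟪μ i, ν j⟫_ℂ = ((q : ℂ) / (2 * ((q : ℂ) - 1))) * (if i = j then 0 else 1))
    (hy : y ∈ X) (hx : x ∈ X) (α εh : ℝ) :
    ⟪psi ρ σ u μ α εh y, fixedWitness ρ σ ν v α εh x⟫_ℂ = 0 := by
  have hq₀ : (q : ℂ) ≠ 0 := Nat.cast_ne_zero.mpr (by omega)
  have hq₁ : (q : ℂ) - 1 ≠ 0 := sub_ne_zero.mpr (Nat.cast_ne_one.mpr (by omega))
  simp only [psi_eq_sub_tensorSum, fixedWitness, inner_sub_left, inner_add_right, inner_smul_left,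
    inner_smul_right, inner_tMinus_tPlus, inner_tMinus_tensorSum, inner_tensorSum_tPlus,
    inner_tensorSum_of_isCVS hP hμν hy hx, Complex.conj_ofReal]
  push_cast
  field_simp
  ring

theorem LambdaCVS_fixedWitness [FiniteDimensional ℂ 𝓗] (hq : 2 ≤ q) (hP : IsCVS X ρ σ u v)
    (hμν : ∀ i j, ⟪μ i, ν j⟫_ℂ = ((q : ℂ) / (2 * ((q : ℂ) - 1))) * (if i = j then 0 else 1))
    (hx : x ∈ X) (α εh : ℝ) :
    LambdaCVS X ρ σ u μ α εh (fixedWitness ρ σ ν v α εh x) = fixedWitness ρ σ ν v α εh x := by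
  refine projL_apply_eq_self (mem_orthogonal_span_of_forall_inner_eq_zero ?_)
  rintro _ ⟨y, hy, rfl⟩
  exact inner_psi_fixedWitness hq hP hμν hy hx α εh

theorem PiX_fixedWitness (hμν : ∀ i, ⟪μ i, ν i⟫_ℂ = 0) (α εh : ℝ) :
    PiX μ x (fixedWitness ρ σ ν v α εh x) = fixedWitness ρ σ ν v α εh x := by
  rw [fixedWitness, map_add, map_smul, PiX_tPlus, PiX_tensorSum _ _ _ _ _ fun j => hμν (x j)]

theorem fixedWitness_mem_eigenspace_one [FiniteDimensional ℂ 𝓗] (hq : 2 ≤ q)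
    (hP : IsCVS X ρ σ u v)
    (hμν : ∀ i j, ⟪μ i, ν j⟫_ℂ = ((q : ℂ) / (2 * ((q : ℂ) - 1))) * (if i = j then 0 else 1))
    (hx : x ∈ X) (α εh : ℝ) :
    fixedWitness ρ σ ν v α εh x ∈ Module.End.eigenspace (Ucvs X ρ σ u μ α εh x) 1 := by
  rw [Module.End.mem_eigenspace_iff, one_smul, Ucvs, LinearMap.comp_apply,
    two_smul_sub_id_apply_of_apply_eq_self (LambdaCVS_fixedWitness hq hP hμν hx α εh)]
  exact two_smul_sub_id_apply_of_apply_eq_self (PiX_fixedWitness (fun i => by simp [hμν]) α εh)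

theorem inner_fixedWitness_tPlus (hρ : ‖ρ x‖ = 1) (hσ : ‖σ x‖ = 1) (α εh : ℝ) :
    ⟪fixedWitness ρ σ ν v α εh x, (tPlus ρ σ x : BigSpace 𝓗 q n m)⟫_ℂ = 1 := by
  rw [fixedWitness, inner_add_left, inner_smul_left, inner_tensorSum_tPlus, mul_zero, add_zero,
    inner_self_eq_norm_sq_to_K]
  norm_cast
  rw [norm_tPlus_sq, hρ, hσ]
  norm_num

theorem norm_fixedWitness_sq_le (hq : 1 ≤ q) (hρ : ‖ρ x‖ = 1) (hσ : ‖σ x‖ = 1)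
    (hν : ∀ i, ‖ν i‖ = 1) {α εh : ℝ} (hα : 0 < α) (hε : 0 ≤ εh) (hαw : wSize v x ≤ α) :
    ‖(fixedWitness ρ σ ν v α εh x : BigSpace 𝓗 q n m)‖ ^ 2 ≤ 1 + εh := by
  set β : ℝ := √(εh / α) * (q - 1) / q with hβdef
  have hβ : β ^ 2 ≤ εh / α := by
    have hq' : (1 : ℝ) ≤ q := by exact_mod_cast hq
    have hfrac₀ : 0 ≤ ((q : ℝ) - 1) / q := div_nonneg (by linarith) (by linarith)
    have hfrac₁ : ((q : ℝ) - 1) / q ≤ 1 := by rw [div_le_one (by linarith)]; linarith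
    calc β ^ 2 = εh / α * (((q : ℝ) - 1) / q) ^ 2 := by
          rw [hβdef, mul_div_assoc, mul_pow, Real.sq_sqrt (by positivity)]
      _ ≤ εh / α := mul_le_of_le_one_right (by positivity) (pow_le_one₀ hfrac₀ hfrac₁)
  have hw : 0 ≤ wSize v x := Finset.sum_nonneg fun j _ => sq_nonneg _
  have hnorm : ‖(fixedWitness ρ σ ν v α εh x : BigSpace 𝓗 q n m)‖ ^ 2 = 1 + β ^ 2 * wSize v x := by
    rw [fixedWitness, norm_add_sq (𝕜 := ℂ), inner_smul_right, inner_tPlus_tensorSum, mul_zero,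
      map_zero, mul_zero, add_zero, norm_smul, mul_pow, Complex.norm_real, Real.norm_eq_abs,
      sq_abs, norm_tPlus_sq, norm_tensorSum_sq _ _ _ hν, hρ, hσ, ← hβdef]
    norm_num
  calc ‖(fixedWitness ρ σ ν v α εh x : BigSpace 𝓗 q n m)‖ ^ 2 = 1 + β ^ 2 * wSize v x := hnorm
    _ ≤ 1 + εh / α * α := by gcongr
    _ = 1 + εh := by rw [div_mul_cancel₀ _ hα.ne']

end Witness

theorem tplus_overlap_bound_general (hq : 2 ≤ q) [FiniteDimensional ℂ 𝓗]
    (X : Finset (Fin n → Fin q)) (ρ σ : (Fin n → Fin q) → 𝓗)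
    (hρ : ∀ x ∈ X, ‖ρ x‖ = 1) (hσ : ∀ x ∈ X, ‖σ x‖ = 1)
    (u v : (Fin n → Fin q) → Fin n → EuclideanSpace ℂ (Fin m))
    (hP : IsCVS X ρ σ u v)
    (μ : Fin q → EuclideanSpace ℂ (Fin q))
    (x : Fin n → Fin q) (hx : x ∈ X)
    (α εh : ℝ) (hα : 0 < α) (hε : 0 < εh)
    (ν : Fin q → EuclideanSpace ℂ (Fin q)) (hν : ∀ i, ‖ν i‖ = 1)
    (hμν : ∀ i j, (inner ℂ (μ i) (ν j) : ℂ) =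
      ((q : ℂ) / (2 * ((q : ℂ) - 1))) * (if i = j then 0 else 1))
    (hαw : wSize v x ≤ α) :
    1 / (1 + εh) ≤
        ‖projL (Module.End.eigenspace (Ucvs X ρ σ u μ α εh x) 1) (tPlus ρ σ x)‖ ^ 2 ∧
      1 - εh ≤ 1 / (1 + εh) := by
  refine ⟨one_div_le_norm_projL_sq (fixedWitness_mem_eigenspace_one hq hP hμν hx α εh)
    (inner_fixedWitness_tPlus (hρ x hx) (hσ x hx) α εh)
    (norm_fixedWitness_sq_le (by omega) (hρ x hx) (hσ x hx) hν hα hε.le hαw), ?_⟩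
  rw [le_div_iff₀ (by linarith)]
  nlinarith [sq_nonneg εh]

/-- if `α ≥ w_−(𝒫,x)` then
`‖P_0(U(𝒫,x,α,ε̂))|t_{x+}⟩‖² ≥ 1/(1+ε̂) ≥ 1 − ε̂`. -/
theorem tplus_overlap_bound (hq : 2 ≤ q) (hn : 1 ≤ n) (hm : 1 ≤ m) [FiniteDimensional ℂ 𝓗]
    (X : Finset (Fin n → Fin q)) (ρ σ : (Fin n → Fin q) → 𝓗)
    (hρ : ∀ x ∈ X, ‖ρ x‖ = 1) (hσ : ∀ x ∈ X, ‖σ x‖ = 1)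
    (u v : (Fin n → Fin q) → Fin n → EuclideanSpace ℂ (Fin m))
    (hP : IsCVS X ρ σ u v)
    (μ : Fin q → EuclideanSpace ℂ (Fin q)) (hμ : ∀ i, ‖μ i‖ = 1)
    (x : Fin n → Fin q) (hx : x ∈ X)
    (α εh : ℝ) (hα : 0 < α) (hε : 0 < εh)
    (ν : Fin q → EuclideanSpace ℂ (Fin q)) (hν : ∀ i, ‖ν i‖ = 1)
    (hμν : ∀ i j, (inner ℂ (μ i) (ν j) : ℂ) =
      ((q : ℂ) / (2 * ((q : ℂ) - 1))) * (if i = j then 0 else 1))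
    (hαw : wSize v x ≤ α) :
    1 / (1 + εh) ≤
        ‖projL (Module.End.eigenspace (Ucvs X ρ σ u μ α εh x) 1) (tPlus ρ σ x)‖ ^ 2 ∧
      1 - εh ≤ 1 / (1 + εh) :=
  tplus_overlap_bound_general hq X ρ σ hρ hσ u v hP μ x hx α εh hα hε ν hν hμν hαw
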